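/- arXiv:2206.06169 — 2 statements merged into one kernel-verified Lean document; each statement's English description precedes it below -/
import Mathlib

section
/- Conversely, if A ∈ ℝ^{K×K} has nonnegative entries and trace(exp(A)) = K, then the directed graph whose edges are the pairs (i,j) with A_{ij} > 0 contains no directed cycle. -/
/-!
In `trace (exp A) = ∑ₖ trace (Aᵏ) / k!` every term is nonnegative and the `k = 0` term is
already `K`, so all the others vanish. A cycle of length `k` through `i` would make the
`k`-th term positive, since it gives `0 < (Aᵏ) i i`.
-/

open Matrix NormedSpace Nat

namespace Matrix

variable {n R : Type*} [Fintype n] [DecidableEq n]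

theorem exists_pow_apply_pos_of_transGen [Semiring R] [PartialOrder R] [IsStrictOrderedRing R]
    {A : Matrix n n R} (hA : ∀ i j, 0 ≤ A i j) {i j : n}
    (h : Relation.TransGen (fun i j => 0 < A i j) i j) : ∃ k ≠ 0, 0 < (A ^ k) i j := by
  induction h with
  | single hij => exact ⟨1, one_ne_zero, by simpa using hij⟩
  | @tail l j _ hlj ih =>
    obtain ⟨k, hk, hil⟩ := ih
    refine ⟨k + 1, k.succ_ne_zero, ?_⟩
    rw [pow_succ, mul_apply]
    exact Finset.sum_pos' (fun m _ => mul_nonneg (pow_apply_nonneg hA k i m) (hA m j))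
      ⟨l, Finset.mem_univ l, mul_pos hil hlj⟩

theorem exists_trace_pow_pos_of_transGen [Semiring R] [PartialOrder R] [IsStrictOrderedRing R]
    {A : Matrix n n R} (hA : ∀ i j, 0 ≤ A i j) {i : n}
    (h : Relation.TransGen (fun i j => 0 < A i j) i i) : ∃ k ≠ 0, 0 < trace (A ^ k) := by
  obtain ⟨k, hk, hii⟩ := exists_pow_apply_pos_of_transGen hA h
  exact ⟨k, hk, Finset.sum_pos' (fun m _ => pow_apply_nonneg hA k m m) ⟨i, Finset.mem_univ i, hii⟩⟩

theorem hasSum_trace_exp {𝕂 : Type*} [RCLike 𝕂] (A : Matrix n n 𝕂) :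
    HasSum (fun k => (k !⁻¹ : 𝕂) * trace (A ^ k)) (trace (exp A)) := by
  have h : HasSum (fun k => (k !⁻¹ : 𝕂) • A ^ k) (exp A) := by
    open scoped Norms.Operator in exact exp_series_hasSum_exp' A
  simpa only [Function.comp_def, traceAddMonoidHom_apply, trace_smul, smul_eq_mul] using
    h.map (traceAddMonoidHom n 𝕂) continuous_id.matrix_trace

theorem card_add_inv_factorial_mul_trace_pow_le_trace_exp {A : Matrix n n ℝ} (hA : ∀ i j, 0 ≤ A i j)
    {k : ℕ} (hk : k ≠ 0) : Fintype.card n + (k !⁻¹ : ℝ) * trace (A ^ k) ≤ trace (exp A) := by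
  have hterm_nonneg (l : ℕ) : 0 ≤ (l !⁻¹ : ℝ) * trace (A ^ l) :=
    mul_nonneg (by positivity) (Finset.sum_nonneg fun m _ => pow_apply_nonneg hA l m m)
  have := sum_le_hasSum {0, k} (fun l _ => hterm_nonneg l) (hasSum_trace_exp A)
  simpa [Finset.sum_pair hk.symm] using this

end Matrix

/-- If `A` has nonnegative entries and `trace (exp A) = K`, then the directed
graph with edges `{(i,j) : A i j > 0}` contains no directed cycle. -/
theorem trace_exp_eq_card_acyclic {K : ℕ} (A : Matrix (Fin K) (Fin K) ℝ)
    (hA : ∀ i j, 0 ≤ A i j) (htr : (NormedSpace.exp A).trace = K) :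
    ∀ i, ¬ Relation.TransGen (fun i j => 0 < A i j) i i := by
  intro i hcycle
  obtain ⟨k, hk, htrace_pos⟩ := exists_trace_pow_pos_of_transGen hA hcycle
  have hle := card_add_inv_factorial_mul_trace_pow_le_trace_exp hA hk
  rw [htr, Fintype.card_fin] at hle
  have : 0 < (k !⁻¹ : ℝ) * trace (A ^ k) := by positivity
  linarith
end

section
/- Let p(C1,C2 | I1,I2) factorize according to the graph C1 → C2 under perfect interventions: p(C1,C2|I1=0,I2) = p(C1)·q(C2|C1,I2) and p(C1,C2|I1=1,I2) = p̃(C1)·q(C2|C1,I2), where q(C2|C1,I2=1) = p̃₂(C2) does not depend on C1. Suppose the anti-causal factorization p(C2|I2)·r(C1|C2) with r not depending on I2 reproduces these distributions for all intervention settings. Then for almost all c1, c2: p(C1 = c1 | C2 = c2, I2 = 1) = p(C1 = c1 | I1) and p(C1 = c1 | C2 = c2, I2 = 0) = p(C1 = c1 | C2 = c2, I1), so r must depend on I2 whenever C1 and C2 are not conditionally independent under I2 = 0; this is a contradiction. -/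
/-!
Under the intervention `I2 = 1` the joint is `p1(c1) · p2t(c2)`, so its `C2`-marginal is `p2t` and
the anti-causal factor is forced to be `r(c2, c1) = p1(c1)`. Since `r` is shared with the
observational regime, there `p1(c1) · q(c1, 0, c2) = p(c2) · p1(c1)`, i.e. `C1` and `C2` are
independent, contradicting faithfulness.
-/

open Finset

section

variable {α β : Type*} [Fintype α]

theorem sum_mul_const_of_sum_eq_one {p : α → ℝ} (hp : ∑ a, p a = 1) (x : ℝ) :
    ∑ a, p a * x = x := by
  rw [← sum_mul, hp, one_mul]

theorem anticausal_factor_eq_of_product {p : α → ℝ} {p' : β → ℝ} {r : β → α → ℝ}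
    (hp : ∑ a, p a = 1) (hp' : ∀ b, p' b ≠ 0)
    (hr : ∀ a b, p a * p' b = (∑ a', p a' * p' b) * r b a) (b : β) (a : α) :
    r b a = p a := by
  have h := hr a b
  rw [sum_mul_const_of_sum_eq_one hp, mul_comm (p a)] at h
  exact (mul_left_cancel₀ (hp' b) h).symm

theorem conditional_eq_marginal_of_factor_eq_marginal {p : α → ℝ} {q : α → β → ℝ} {a : α} {b : β}
    (hpa : p a ≠ 0) (h : p a * q a b = (∑ a', p a' * q a' b) * p a) :
    q a b = ∑ a', p a' * q a' b :=
  mul_left_cancel₀ hpa (h.trans (mul_comm _ _))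

end

theorem no_anticausal_factorization_general {C1 C2 : Type*} [Fintype C1]
    (p1 : C1 → ℝ) (q : C1 → Bool → C2 → ℝ) (p2t : C2 → ℝ)
    (hp1pos : ∀ c1, 0 < p1 c1) (hp1sum : ∑ c1, p1 c1 = 1)
    -- perfect intervention on C2: the intervened conditional is a fixed marginal
    (hperfect : ∀ c1 c2, q c1 true c2 = p2t c2)
    (hp2tpos : ∀ c2, 0 < p2t c2)
    -- faithfulness/dependence of C1 and C2 in the observational regime:
    (hdep : ∃ c1 c2, q c1 false c2 ≠ ∑ c1', p1 c1' * q c1' false c2) :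
    ¬ ∃ r : C2 → C1 → ℝ, ∀ (i2 : Bool) (c1 : C1) (c2 : C2),
        p1 c1 * q c1 i2 c2 = (∑ c1', p1 c1' * q c1' i2 c2) * r c2 c1 := by
  rintro ⟨r, hr⟩
  have hr_eq : ∀ c2 c1, r c2 c1 = p1 c1 :=
    anticausal_factor_eq_of_product hp1sum (fun c2 => (hp2tpos c2).ne')
      (fun c1 c2 => by simpa only [hperfect] using hr true c1 c2)
  obtain ⟨c1, c2, hne⟩ := hdep
  exact hne (conditional_eq_marginal_of_factor_eq_marginal (q := fun a b => q a false b)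
    (hp1pos c1).ne' (hr_eq c2 c1 ▸ hr false c1 c2))

/-- Non-identifiability contradiction for the anti-causal factorization.
The true model has graph `C1 → C2` with perfect interventions: with `I1 = 0`,
the joint is `p(c1, c2 | I2) = p1(c1) · q(c1, I2, c2)` where under an
intervention on `C2` (`I2 = true`) the conditional `q(c1, true, ·) = p2t` does
not depend on `c1`.  If the observational and interventional regimes share full
support and `C1, C2` are dependent in the observational regime, then there is
no factorization `p(c1, c2 | I2) = p(c2 | I2) · r(c2, c1)` with `r` independent
of `I2` that reproduces the joint for both values of `I2`. -/
theorem no_anticausal_factorization {C1 C2 : Type*} [Fintype C1] [Fintype C2]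
    (p1 : C1 → ℝ) (q : C1 → Bool → C2 → ℝ) (p2t : C2 → ℝ)
    (hp1pos : ∀ c1, 0 < p1 c1) (hp1sum : ∑ c1, p1 c1 = 1)
    (hqpos : ∀ c1 i2 c2, 0 ≤ q c1 i2 c2) (hqsum : ∀ c1 i2, ∑ c2, q c1 i2 c2 = 1)
    -- perfect intervention on C2: the intervened conditional is a fixed marginal
    (hperfect : ∀ c1 c2, q c1 true c2 = p2t c2)
    (hp2tpos : ∀ c2, 0 < p2t c2)
    -- faithfulness/dependence of C1 and C2 in the observational regime:
    (hdep : ∃ c1 c2, q c1 false c2 ≠ ∑ c1', p1 c1' * q c1' false c2) :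
    ¬ ∃ r : C2 → C1 → ℝ, ∀ (i2 : Bool) (c1 : C1) (c2 : C2),
        p1 c1 * q c1 i2 c2 = (∑ c1', p1 c1' * q c1' i2 c2) * r c2 c1 :=
  no_anticausal_factorization_general p1 q p2t hp1pos hp1sum hperfect hp2tpos hdep
end
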